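/- arXiv:math/9408212 — 7 statements merged into one kernel-verified Lean document; each statement's English description precedes it below -/
import Mathlib

section
/- Let k be a number field and let x = (x₁, x₂) be a pair of 2×2 matrices over k. Then the binary quadratic form F_x(X,Y) = det(X·x₁ + Y·x₂) is irreducible as an element of the polynomial ring k[X,Y] if and only if x is k-stable, i.e., for every g = (g₁,g₂,g₃) ∈ GL₂(k) × GL₂(k) × GL₂(k) the convex hull in ℝ³ of the finite set of weight vectors { (ε_j, ε_k, ε_i) : 1 ≤ i,j,k ≤ 2 and the (j,k) entry of (g·x)_i is nonzero } contains a neighborhood of the origin of ℝ³, where ε_1 = 1 and ε_2 = −1. (This is Theorem (2.1) for the D₄ case, in which the set L₀ of semistable points with semisimple identity-component stabilizer equals the set of x with F_x irreducible.) -/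
/-!
Irreducibility of the binary quadratic form `F_x(v) = det (v₀ • x₀ + v₁ • x₁)` means that it has
no nontrivial zero, i.e. that the pencil `x` is anisotropic, and anisotropy is preserved by the
action. For an anisotropic pencil every `2 × 2` slice of the `2 × 2 × 2` array of coordinates, in
each of the three directions, is invertible, so it has two nonzero entries in distinct rows and
columns. Their weights average to `±eₖ`, and the convex hull of the `±eₖ` is a neighbourhood of
the origin. Conversely, a nontrivial zero `v` of `F_x` lets `g₃` make the second matrix of the
pencil singular and then `g₁` kill its second row; every remaining weight `w` satisfies
`w₀ + w₂ ≥ 0`, so the convex hull lies in a half-space.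
-/

open Matrix MvPolynomial Topology

lemma exists_neg_of_convexHull_mem_nhds {E : Type*} [AddCommGroup E] [Module ℝ E]
    [TopologicalSpace E] [ContinuousSMul ℝ E] {S : Set E} (hS : convexHull ℝ S ∈ 𝓝 0)
    (f : E →ₗ[ℝ] ℝ) {p : E} (hp : f p < 0) : ∃ s ∈ S, f s < 0 := by
  by_contra! hf
  have hsub : convexHull ℝ S ⊆ {w | 0 ≤ f w} :=
    convexHull_min hf (convex_halfSpace_ge f.isLinear 0)
  have hline : ∀ᶠ t : ℝ in 𝓝 0, t • p ∈ convexHull ℝ S :=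
    (continuous_id.smul continuous_const).tendsto' 0 0 (zero_smul ℝ p) hS
  obtain ⟨t, hmem, ht⟩ :=
    ((hline.filter_mono nhdsWithin_le_nhds).and self_mem_nhdsWithin).exists (f := 𝓝[>] 0)
  have hft : 0 ≤ t * f p := by simpa using hsub hmem
  exact (mul_neg_of_pos_of_neg ht hp).not_ge hft

lemma convex_mem_nhds_zero_of_single_mem {ι : Type*} [Fintype ι] [DecidableEq ι] [Nonempty ι]
    {C : Set (ι → ℝ)} (hC : Convex ℝ C) (hpos : ∀ k, Pi.single k 1 ∈ C)
    (hneg : ∀ k, Pi.single k (-1) ∈ C) : C ∈ 𝓝 0 := by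
  set N : ℝ := (Fintype.card ι : ℝ)
  have hN : 0 < N := by simp [N, Fintype.card_pos]
  have hsegment (k : ι) (t : ℝ) (ht : |t| ≤ 1) : Pi.single k t ∈ C := by
    rw [abs_le] at ht
    convert hC (hneg k) (hpos k) (by linarith : 0 ≤ (1 - t) / 2) (by linarith : 0 ≤ (1 + t) / 2)
      (by ring) using 1
    ext m
    by_cases hm : m = k
    · subst hm; simp; ring
    · simp [hm]
  refine Filter.mem_of_superset (Metric.ball_mem_nhds 0 (inv_pos.mpr hN)) fun w hw => ?_
  have hw' (k : ι) : |N * w k| ≤ 1 := by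
    have hk : |w k| < N⁻¹ := (norm_le_pi_norm w k).trans_lt (mem_ball_zero_iff.mp hw)
    rw [abs_mul, abs_of_pos hN]
    calc N * |w k| ≤ N * N⁻¹ := by gcongr
      _ = 1 := mul_inv_cancel₀ hN.ne'
  have hsum := hC.sum_mem (t := Finset.univ) (w := fun _ => N⁻¹)
    (z := fun k => Pi.single k (N * w k)) (fun _ _ => inv_nonneg.mpr hN.le) (by simp [N])
    (fun k _ => hsegment k _ (hw' k))
  convert hsum using 1
  conv_lhs => rw [← Finset.univ_sum_single w]
  refine Finset.sum_congr rfl fun k _ => ?_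
  rw [← Pi.single_smul, smul_eq_mul, inv_mul_cancel_left₀ hN.ne']

lemma Matrix.exists_perm_forall_ne_zero_of_det_ne_zero {n R : Type*} [Fintype n] [DecidableEq n]
    [CommRing R] {M : Matrix n n R} (h : M.det ≠ 0) : ∃ σ : Equiv.Perm n, ∀ c, M (σ c) c ≠ 0 := by
  rw [det_apply] at h
  obtain ⟨σ, -, hσ⟩ := Finset.exists_ne_zero_of_sum_ne_zero h
  refine ⟨σ, fun c hc => hσ ?_⟩
  rw [Finset.prod_eq_zero (f := fun i => M (σ i) i) (Finset.mem_univ c) hc, smul_zero]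

section BinaryQuadraticForm

variable {K : Type*} [Field K]

noncomputable def binaryQuadForm (a b c : K) : MvPolynomial (Fin 2) K :=
  C a * X 0 ^ 2 + C b * X 0 * X 1 + C c * X 1 ^ 2

@[simp]
lemma eval_binaryQuadForm (a b c : K) (v : Fin 2 → K) :
    eval v (binaryQuadForm a b c) = a * v 0 ^ 2 + b * v 0 * v 1 + c * v 1 ^ 2 := by
  simp [binaryQuadForm]

lemma finSuccEquiv_binaryQuadForm (a b c : K) :
    finSuccEquiv K 1 (binaryQuadForm a b c) =
      Polynomial.C (C a) * Polynomial.X ^ 2 + Polynomial.C (C b * X 0) * Polynomial.X +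
        Polynomial.C (C c * X 0 ^ 2) := by
  have hC (r : K) : finSuccEquiv K 1 (C r) = Polynomial.C (C r) :=
    (finSuccEquiv K 1).commutes r
  simp only [binaryQuadForm, map_add, map_mul, map_pow, hC, finSuccEquiv_X_zero,
    show (1 : Fin 2) = Fin.succ 0 from rfl, finSuccEquiv_X_succ]
  ring

lemma binaryQuadForm_eq_C_mul (a b c : K) (ha : a ≠ 0) :
    binaryQuadForm a b c = C a * binaryQuadForm 1 (b / a) (c / a) := by
  have h (r : K) : (C r : MvPolynomial (Fin 2) K) = C a * C (r / a) := by
    rw [← C_mul, mul_div_cancel₀ _ ha]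
  rw [binaryQuadForm, binaryQuadForm, h b, h c, C_1]
  ring

/-- Over `K[X₁]` the form is a monic quadratic `q` in `X₀`, reducible iff it has a root in `K[X₁]`;
a zero `(t, 1)` gives the root `t X₁`, and a root `r` gives the zero `(r(1), 1)`. -/
lemma irreducible_binaryQuadForm_one_iff (b c : K) :
    Irreducible (binaryQuadForm 1 b c) ↔ ∀ v ≠ 0, eval v (binaryQuadForm 1 b c) ≠ 0 := by
  set q : Polynomial (MvPolynomial (Fin 1) K) :=
    Polynomial.X ^ 2 + Polynomial.C (C b * X 0) * Polynomial.X + Polynomial.C (C c * X 0 ^ 2)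
  have hq : finSuccEquiv K 1 (binaryQuadForm 1 b c) = q := by
    simp [finSuccEquiv_binaryQuadForm, q]
  have hmonic : q.Monic := by
    simp only [q, add_assoc]
    exact Polynomial.monic_X_pow_add (by compute_degree!)
  have hdeg : q.natDegree = 2 := by simp only [q]; compute_degree!
  rw [← MulEquiv.irreducible_iff (finSuccEquiv K 1), hq,
    hmonic.irreducible_iff_roots_eq_zero_of_degree_le_three hdeg.ge (by omega),
    Multiset.eq_zero_iff_forall_notMem]
  simp_rw [Polynomial.mem_roots hmonic.ne_zero, eval_binaryQuadForm]
  constructor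
  · intro h v hv hzero
    have hv1 : v 1 ≠ 0 := fun hv1 =>
      hv (funext fun i => by fin_cases i <;> simp_all)
    set t := v 0 / v 1
    have ht : t ^ 2 + b * t + c = 0 := by
      simp only [t]; field_simp; linear_combination hzero
    have hCt := congrArg (fun s => (C s : MvPolynomial (Fin 1) K) * X 0 ^ 2) ht
    simp only [map_add, map_mul, map_pow, map_zero, zero_mul] at hCt
    apply h (C t * X 0)
    simp only [q, Polynomial.IsRoot, Polynomial.eval_add, Polynomial.eval_mul,
      Polynomial.eval_pow, Polynomial.eval_X, Polynomial.eval_C]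
    linear_combination hCt
  · intro h r hr
    have ht := congrArg (eval fun _ => (1 : K)) hr
    simp only [q, Polynomial.eval_add, Polynomial.eval_mul, Polynomial.eval_pow,
      Polynomial.eval_X, Polynomial.eval_C, map_add, map_mul, map_pow, eval_C, eval_X,
      one_pow, mul_one, map_zero] at ht
    exact h ![eval (fun _ => 1) r, 1] (by simp) (by simp; linear_combination ht)

lemma irreducible_binaryQuadForm_iff (a b c : K) :
    Irreducible (binaryQuadForm a b c) ↔ ∀ v ≠ 0, eval v (binaryQuadForm a b c) ≠ 0 := by
  by_cases ha : a = 0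
  · refine iff_of_false (fun hirr => ?_) fun h => h ![1, 0] (by simp) (by simp [ha])
    have hfac : binaryQuadForm a b c = X 1 * (C b * X 0 + C c * X 1) := by
      rw [binaryQuadForm, ha, C_0]
      ring
    rcases hirr.isUnit_or_isUnit hfac with hu | hu <;> simpa using hu.map constantCoeff
  · rw [binaryQuadForm_eq_C_mul a b c ha, irreducible_isUnit_mul ((Ne.isUnit ha).map C),
      irreducible_binaryQuadForm_one_iff]
    simp [ha]

end BinaryQuadraticForm

section Pencil

variable {K : Type*} [Field K] {ι n : Type*} [Fintype ι] [DecidableEq ι] [Fintype n] [DecidableEq n]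

def IsAnisotropicPencil (y : ι → Matrix n n K) : Prop :=
  ∀ v : ι → K, v ≠ 0 → (∑ i, v i • y i).det ≠ 0

def pencilAction (g₁ g₂ : GL n K) (g₃ : GL ι K) (x : ι → Matrix n n K) : ι → Matrix n n K :=
  fun i => g₁ * (∑ j, (g₃ : Matrix ι ι K) i j • x j) * (g₂ : Matrix n n K)ᵀ

lemma sum_smul_pencilAction (g₁ g₂ : GL n K) (g₃ : GL ι K) (x : ι → Matrix n n K) (v : ι → K) :
    ∑ i, v i • pencilAction g₁ g₂ g₃ x i =
      g₁ * (∑ j, (v ᵥ* (g₃ : Matrix ι ι K)) j • x j) * (g₂ : Matrix n n K)ᵀ := by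
  simp only [pencilAction, vecMul, dotProduct, Finset.mul_sum, Finset.sum_mul, Finset.smul_sum,
    Finset.sum_smul, Matrix.mul_smul, Matrix.smul_mul, smul_smul]
  exact Finset.sum_comm

lemma IsAnisotropicPencil.pencilAction {x : ι → Matrix n n K}
    (hx : IsAnisotropicPencil x) (g₁ g₂ : GL n K) (g₃ : GL ι K) :
    IsAnisotropicPencil (pencilAction g₁ g₂ g₃ x) := by
  intro v hv
  rw [sum_smul_pencilAction, det_mul, det_mul, det_transpose]
  refine mul_ne_zero (mul_ne_zero g₁.det_ne_zero (hx _ fun h => hv ?_)) g₂.det_ne_zero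
  exact vecMul_injective_of_isUnit g₃.isUnit (h.trans (zero_vecMul _).symm)

variable {y : n → Matrix n n K}

lemma IsAnisotropicPencil.det_ne_zero (hy : IsAnisotropicPencil y) (i : n) : (y i).det ≠ 0 := by
  simpa [Pi.single_apply] using hy (Pi.single i 1) (by simp)

lemma IsAnisotropicPencil.det_rowSlice_ne_zero (hy : IsAnisotropicPencil y) (j : n) :
    (of fun r c => y r j c).det ≠ 0 := by
  intro h
  obtain ⟨v, hv, hvM⟩ := exists_vecMul_eq_zero_iff.mpr h
  refine hy v hv (det_eq_zero_of_row_eq_zero j fun c => ?_)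
  simpa [vecMul, dotProduct, Matrix.sum_apply] using congrFun hvM c

lemma IsAnisotropicPencil.transpose (hy : IsAnisotropicPencil y) :
    IsAnisotropicPencil fun i => (y i)ᵀ := by
  intro v hv
  rw [← det_transpose]
  simpa [transpose_sum, transpose_smul] using hy v hv

lemma IsAnisotropicPencil.det_colSlice_ne_zero (hy : IsAnisotropicPencil y) (l : n) :
    (of fun r c => y r c l).det ≠ 0 :=
  hy.transpose.det_rowSlice_ne_zero l

end Pencil

section FinTwo

variable {K : Type*} [Field K]

lemma irreducible_det_iff_isAnisotropicPencil (x : Fin 2 → Matrix (Fin 2) (Fin 2) K) :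
    Irreducible ((Matrix.of fun a b =>
        (X 0 : MvPolynomial (Fin 2) K) * C (x 0 a b) + X 1 * C (x 1 a b)).det) ↔
      IsAnisotropicPencil x := by
  set F := (Matrix.of fun a b =>
    (X 0 : MvPolynomial (Fin 2) K) * C (x 0 a b) + X 1 * C (x 1 a b)).det
  have hF : F = binaryQuadForm (x 0).det
      (x 0 0 0 * x 1 1 1 + x 1 0 0 * x 0 1 1 - x 0 0 1 * x 1 1 0 - x 1 0 1 * x 0 1 0)
      (x 1).det := by
    simp only [F, binaryQuadForm, det_fin_two, of_apply, C_sub, C_add, C_mul]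
    ring
  have heval (v : Fin 2 → K) : eval v F = (∑ i, v i • x i).det := by
    rw [RingHom.map_det]
    congr 1
    ext a b
    simp [Fin.sum_univ_two, mul_comm]
  rw [hF, irreducible_binaryQuadForm_iff, ← hF]
  simp only [heval, IsAnisotropicPencil]

lemma exists_GL_row_one_eq {v : Fin 2 → K} (hv : v ≠ 0) :
    ∃ g : GL (Fin 2) K, (g : Matrix (Fin 2) (Fin 2) K) 1 = v := by
  by_cases h0 : v 0 = 0
  · have h1 : v 1 ≠ 0 := fun h1 => hv (funext fun i => by fin_cases i <;> assumption)
    refine ⟨GeneralLinearGroup.mkOfDetNeZero !![1, 0; v 0, v 1] (by simpa [det_fin_two]), ?_⟩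
    ext c; fin_cases c <;> rfl
  · refine ⟨GeneralLinearGroup.mkOfDetNeZero !![0, 1; v 0, v 1] (by simpa [det_fin_two]), ?_⟩
    ext c; fin_cases c <;> rfl

lemma exists_pencilAction_row_eq_zero {x : Fin 2 → Matrix (Fin 2) (Fin 2) K}
    (hx : ¬ IsAnisotropicPencil x) :
    ∃ g₁ g₃ : GL (Fin 2) K, ∀ l, pencilAction g₁ 1 g₃ x 1 1 l = 0 := by
  obtain ⟨v, hv, hdet⟩ : ∃ v : Fin 2 → K, v ≠ 0 ∧ (∑ i, v i • x i).det = 0 := by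
    simpa only [IsAnisotropicPencil, not_forall, not_not, exists_prop] using hx
  obtain ⟨u, hu, huS⟩ := exists_vecMul_eq_zero_iff.mpr hdet
  obtain ⟨g₁, hg₁⟩ := exists_GL_row_one_eq hu
  obtain ⟨g₃, hg₃⟩ := exists_GL_row_one_eq hv
  refine ⟨g₁, g₃, fun l => ?_⟩
  simp only [pencilAction, Units.val_one, transpose_one, Matrix.mul_one, ← hg₃] at huS ⊢
  rw [mul_apply_eq_vecMul, hg₁, huS, Pi.zero_apply]

end FinTwo

section Weights

variable {K : Type*} [Field K] {y : Fin 2 → Matrix (Fin 2) (Fin 2) K}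

def sgn (a : Fin 2) : ℝ := if a = 0 then 1 else -1

lemma sgn_add_sgn_of_ne {a b : Fin 2} (h : a ≠ b) : sgn a + sgn b = 0 := by
  fin_cases a <;> fin_cases b <;> simp_all [sgn]

def weight (i j l : Fin 2) : Fin 3 → ℝ := ![sgn j, sgn l, sgn i]

def supportWeights (y : Fin 2 → Matrix (Fin 2) (Fin 2) K) : Set (Fin 3 → ℝ) :=
  {w | ∃ i j l, y i j l ≠ 0 ∧ w = weight i j l}

lemma weight_mem_supportWeights {i j l : Fin 2} (h : y i j l ≠ 0) :
    weight i j l ∈ supportWeights y :=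
  ⟨i, j, l, h, rfl⟩

lemma midpoint_weight_mem_convexHull {i j l i' j' l' : Fin 2} (h : y i j l ≠ 0)
    (h' : y i' j' l' ≠ 0) :
    midpoint ℝ (weight i j l) (weight i' j' l') ∈ convexHull ℝ (supportWeights y) :=
  (convex_convexHull ℝ _).segment_subset (subset_convexHull ℝ _ (weight_mem_supportWeights h))
    (subset_convexHull ℝ _ (weight_mem_supportWeights h')) (midpoint_mem_segment _ _)

lemma midpoint_weight (i j l i' j' l' : Fin 2) :
    midpoint ℝ (weight i j l) (weight i' j' l') =
      ![(sgn j + sgn j') / 2, (sgn l + sgn l') / 2, (sgn i + sgn i') / 2] := by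
  ext m
  fin_cases m <;> simp [midpoint_eq_smul_add, weight] <;> ring

lemma IsAnisotropicPencil.single_sgn_mem_convexHull (hy : IsAnisotropicPencil y) (k : Fin 3)
    (a : Fin 2) : Pi.single k (sgn a) ∈ convexHull ℝ (supportWeights y) := by
  have hsgn (σ : Equiv.Perm (Fin 2)) : sgn (σ 0) + sgn (σ 1) = 0 :=
    sgn_add_sgn_of_ne (σ.injective.ne (by decide))
  fin_cases k
  · obtain ⟨σ, hσ⟩ := exists_perm_forall_ne_zero_of_det_ne_zero (hy.det_rowSlice_ne_zero a)
    convert midpoint_weight_mem_convexHull (hσ 0) (hσ 1) using 1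
    rw [midpoint_weight, hsgn, sgn_add_sgn_of_ne zero_ne_one]
    ext m; fin_cases m <;> simp
  · obtain ⟨σ, hσ⟩ := exists_perm_forall_ne_zero_of_det_ne_zero (hy.det_colSlice_ne_zero a)
    convert midpoint_weight_mem_convexHull (hσ 0) (hσ 1) using 1
    rw [midpoint_weight, hsgn, sgn_add_sgn_of_ne zero_ne_one]
    ext m; fin_cases m <;> simp
  · obtain ⟨σ, hσ⟩ := exists_perm_forall_ne_zero_of_det_ne_zero (hy.det_ne_zero a)
    convert midpoint_weight_mem_convexHull (hσ 0) (hσ 1) using 1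
    rw [midpoint_weight, hsgn, sgn_add_sgn_of_ne zero_ne_one]
    ext m; fin_cases m <;> simp

lemma IsAnisotropicPencil.convexHull_supportWeights_mem_nhds (hy : IsAnisotropicPencil y) :
    convexHull ℝ (supportWeights y) ∈ 𝓝 0 :=
  convex_mem_nhds_zero_of_single_mem (convex_convexHull ℝ _)
    (fun k => by simpa [sgn] using hy.single_sgn_mem_convexHull k 0)
    (fun k => by simpa [sgn] using hy.single_sgn_mem_convexHull k 1)

lemma convexHull_supportWeights_notMem_nhds (h : ∀ l, y 1 1 l = 0) :
    convexHull ℝ (supportWeights y) ∉ 𝓝 0 := by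
  intro hS
  obtain ⟨_, ⟨i, j, l, hy, rfl⟩, hneg⟩ := exists_neg_of_convexHull_mem_nhds hS
    (LinearMap.proj (R := ℝ) (φ := fun _ => ℝ) 0 + LinearMap.proj 2) (p := Pi.single 0 (-1))
    (by simp)
  have hij : i = 1 ∧ j = 1 := by
    replace hneg : sgn j + sgn i < 0 := by simpa [weight] using hneg
    revert hneg
    fin_cases i <;> fin_cases j <;> norm_num [sgn]
  obtain ⟨rfl, rfl⟩ := hij
  exact hy (h l)

end Weights

theorem irreducible_iff_kStable_D4_general {K : Type*} [Field K]
    (x : Fin 2 → Matrix (Fin 2) (Fin 2) K) :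
    Irreducible ((Matrix.of fun a b =>
        (X 0 : MvPolynomial (Fin 2) K) * C (x 0 a b) + X 1 * C (x 1 a b)).det) ↔
      ∀ g₁ g₂ g₃ : GL (Fin 2) K,
        convexHull ℝ
          {w : Fin 3 → ℝ | ∃ i j l : Fin 2,
            ((g₁ : Matrix (Fin 2) (Fin 2) K) *
                (∑ j', (g₃ : Matrix (Fin 2) (Fin 2) K) i j' • x j') *
                (g₂ : Matrix (Fin 2) (Fin 2) K)ᵀ) j l ≠ 0 ∧
              w = ![if j = 0 then (1 : ℝ) else -1, if l = 0 then (1 : ℝ) else -1,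
                if i = 0 then (1 : ℝ) else -1]} ∈ nhds (0 : Fin 3 → ℝ) := by
  rw [irreducible_det_iff_isAnisotropicPencil]
  refine ⟨fun hx g₁ g₂ g₃ => (hx.pencilAction g₁ g₂ g₃).convexHull_supportWeights_mem_nhds,
    fun hstab => ?_⟩
  by_contra hx
  obtain ⟨g₁, g₃, hrow⟩ := exists_pencilAction_row_eq_zero hx
  exact convexHull_supportWeights_notMem_nhds hrow (hstab g₁ 1 g₃)

/-- Theorem (2.1), `D₄` case: for a pair `x = (x₁, x₂)` of `2×2` matrices over a number
field `K`, the binary quadratic form `F_x(X,Y) = det(X·x₁ + Y·x₂)` is irreducible in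
`K[X,Y]` if and only if `x` is `K`-stable: for every
`g = (g₁, g₂, g₃) ∈ GL₂(K) × GL₂(K) × GL₂(K)`, the convex hull of the weight vectors
`(ε_j, ε_k, ε_i)` (with `ε₁ = 1`, `ε₂ = -1`) of the nonvanishing coordinates of `g·x`
contains a neighborhood of the origin of `ℝ³`.  Here
`(g·x)_i = g₁ · (∑ j, (g₃)_{ij} x_j) · g₂ᵀ`, which encodes
`M_{g·x}(v) = g₁ · M_x(v·g₃) · g₂ᵀ`. -/
theorem irreducible_iff_kStable_D4 {K : Type*} [Field K] [NumberField K]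
    (x : Fin 2 → Matrix (Fin 2) (Fin 2) K) :
    Irreducible ((Matrix.of fun a b =>
        (X 0 : MvPolynomial (Fin 2) K) * C (x 0 a b) + X 1 * C (x 1 a b)).det) ↔
      ∀ g₁ g₂ g₃ : GL (Fin 2) K,
        convexHull ℝ
          {w : Fin 3 → ℝ | ∃ i j l : Fin 2,
            ((g₁ : Matrix (Fin 2) (Fin 2) K) *
                (∑ j', (g₃ : Matrix (Fin 2) (Fin 2) K) i j' • x j') *
                (g₂ : Matrix (Fin 2) (Fin 2) K)ᵀ) j l ≠ 0 ∧
              w = ![if j = 0 then (1 : ℝ) else -1, if l = 0 then (1 : ℝ) else -1,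
                if i = 0 then (1 : ℝ) else -1]} ∈ nhds (0 : Fin 3 → ℝ) :=
  irreducible_iff_kStable_D4_general x
end

section
/- Let f ≥ 1 and n₁, …, n_f ≥ 1 be integers. Let 𝔱* = { y = (y₁,…,y_f) : y_i ∈ ℝ^{n_i} and y_{i1} + ⋯ + y_{i n_i} = 0 for each i }, and let W = S_{n₁} × ⋯ × S_{n_f} act on 𝔱* by permuting the coordinates within each block. Let C⁺ = { y ∈ 𝔱* : for every i and every 1 ≤ j < n_i, the partial sum y_{i1} + ⋯ + y_{ij} is strictly positive } (the interior of the cone generated by the positive weights). Suppose K ⊆ 𝔱* is a convex set such that for every σ ∈ W the set K meets σ·C⁺, i.e., K ∩ σ·C⁺ ≠ ∅. Then K contains a neighborhood of the origin of 𝔱*: there exists r > 0 such that every y ∈ 𝔱* with ‖y‖ < r lies in K. (This is the content of Lemma (1.3): a convex hull Conv_x that contains an interior point of every Weyl translate of the positive-weight cone contains a neighborhood of the origin.) -/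
/-!
By separation in finite dimensions, a convex subset of `𝔱*` contains a neighbourhood of `0` as
soon as every nonzero linear functional is positive somewhere on it. Such a functional pairs `y`
with a coefficient vector `a` that is not constant on some block; choosing `σ ∈ W` that sorts every
block of `a` decreasingly, it suffices that pairing a nonincreasing `a` with a point of `C⁺` gives
a nonnegative number, positive unless `a` is constant. Abel summation rewrites that pairing as
`∑ₖ (aₖ - aₖ₊₁) · (y₁ + ⋯ + yₖ)`: nonnegative weights against positive partial sums.
-/
open Finset

theorem sum_range_mul_eq_sum_range_sub_mul_partialSum {R : Type*} [CommRing R] {N : ℕ}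
    (b Y : ℕ → R) (hY : ∑ k ∈ range N, Y k = 0) :
    ∑ k ∈ range N, b k * Y k =
      ∑ k ∈ range (N - 1), (b k - b (k + 1)) * ∑ j ∈ range (k + 1), Y j := by
  have := sum_range_by_parts b Y N
  simp only [smul_eq_mul, hY, mul_zero, zero_sub] at this
  rw [this, ← sum_neg_distrib]
  exact sum_congr rfl fun k _ => by ring

theorem sum_filter_val_lt_eq_sum_range {M : Type*} [AddCommMonoid M] {N m : ℕ} (g : Fin N → M)
    (hm : m ≤ N) :
    ∑ l ∈ univ.filter (fun l : Fin N => (l : ℕ) < m), g l =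
      ∑ k ∈ range m, if h : k < N then g ⟨k, h⟩ else 0 := by
  rw [sum_filter, sum_fin_eq_sum_range, ← sum_range_add_sum_Ico _ hm]
  rw [sum_eq_zero (s := Ico m N) fun k hk => by simp [(mem_Ico.1 hk).1.not_gt], add_zero]
  exact sum_congr rfl fun k hk => by simp [mem_range.1 hk]

theorem Fin.sum_mul_eq_sum_sub_mul_partialSum {R : Type*} [CommRing R] {N : ℕ} (a y : Fin N → R)
    (hy : ∑ j, y j = 0) :
    ∑ j, a j * y j = ∑ k : Fin (N - 1), (a ⟨k, by omega⟩ - a ⟨k + 1, by omega⟩) *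
      ∑ l ∈ univ.filter (fun l : Fin N => (l : ℕ) < k + 1), y l := by
  set b : ℕ → R := fun k => if h : k < N then a ⟨k, h⟩ else 0
  set Y : ℕ → R := fun k => if h : k < N then y ⟨k, h⟩ else 0
  have hY : ∑ k ∈ range N, Y k = 0 := by rw [← hy, sum_fin_eq_sum_range]
  have hlhs : ∑ j, a j * y j = ∑ k ∈ range N, b k * Y k := by
    rw [sum_fin_eq_sum_range]
    exact sum_congr rfl fun k hk => by simp [b, Y, mem_range.1 hk]
  rw [hlhs, sum_range_mul_eq_sum_range_sub_mul_partialSum b Y hY, sum_fin_eq_sum_range]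
  refine sum_congr rfl fun k hk => ?_
  have hk : k < N - 1 := mem_range.1 hk
  rw [dif_pos hk, sum_filter_val_lt_eq_sum_range y (by omega)]
  simp [b, Y, show k < N by omega, show k + 1 < N by omega]

theorem Antitone.exists_succ_lt_of_ne {α : Type*} [LinearOrder α] {N : ℕ} {a : Fin N → α}
    (ha : Antitone a) {j k : Fin N} (hjk : a j ≠ a k) :
    ∃ i : Fin (N - 1), a ⟨i + 1, by omega⟩ < a ⟨i, by omega⟩ := by
  by_contra! hasc
  have hconst : ∀ (i : ℕ) (hi : i < N), a ⟨i, hi⟩ = a ⟨0, by omega⟩ := by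
    intro i hi
    induction i with
    | zero => rfl
    | succ i ih =>
      rw [← ih (by omega)]
      exact le_antisymm (ha (Fin.mk_le_mk.2 (by omega))) (hasc ⟨i, by omega⟩)
  exact hjk ((hconst j j.isLt).trans (hconst k k.isLt).symm)

-- The paper's `C⁺` for a single block of size `N`.
def posWeightConeInterior (N : ℕ) : Set (Fin N → ℝ) :=
  {y | ∑ j, y j = 0 ∧ ∀ m : ℕ, 1 ≤ m → m < N →
    0 < ∑ l ∈ univ.filter (fun l : Fin N => (l : ℕ) < m), y l}

section
variable {N : ℕ} {a y : Fin N → ℝ}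

theorem sum_mul_nonneg_of_antitone (ha : Antitone a) (hy : y ∈ posWeightConeInterior N) :
    0 ≤ ∑ j, a j * y j := by
  rw [Fin.sum_mul_eq_sum_sub_mul_partialSum a y hy.1]
  refine sum_nonneg fun k _ => mul_nonneg ?_ (hy.2 (k + 1) (by omega) (by omega)).le
  exact sub_nonneg.2 (ha (Fin.mk_le_mk.2 (by omega)))

theorem sum_mul_pos_of_antitone (ha : Antitone a) {j k : Fin N} (hjk : a j ≠ a k)
    (hy : y ∈ posWeightConeInterior N) : 0 < ∑ j, a j * y j := by
  rw [Fin.sum_mul_eq_sum_sub_mul_partialSum a y hy.1]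
  obtain ⟨i, hi⟩ := ha.exists_succ_lt_of_ne hjk
  refine sum_pos' (fun k _ => mul_nonneg ?_ (hy.2 (k + 1) (by omega) (by omega)).le)
    ⟨i, mem_univ _, mul_pos (sub_pos.2 hi) (hy.2 (i + 1) (by omega) (by omega))⟩
  exact sub_nonneg.2 (ha (Fin.mk_le_mk.2 (by omega)))

end

theorem exists_perm_antitone_comp {α : Type*} [LinearOrder α] {N : ℕ} (a : Fin N → α) :
    ∃ τ : Equiv.Perm (Fin N), Antitone (a ∘ τ) :=
  ⟨Tuple.sort (OrderDual.toDual ∘ a), Tuple.monotone_sort (OrderDual.toDual ∘ a)⟩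

theorem LinearMap.apply_eq_sum_sum_single_mul {ι R : Type*} {κ : ι → Type*} [Fintype ι]
    [DecidableEq ι] [∀ i, Fintype (κ i)] [∀ i, DecidableEq (κ i)] [CommSemiring R]
    (G : ((i : ι) → κ i → R) →ₗ[R] R) (x : (i : ι) → κ i → R) :
    G x = ∑ i, ∑ j, G (Pi.single i (Pi.single j 1)) * x i j := by
  conv_lhs => rw [← univ_sum_single x, map_sum]
  refine sum_congr rfl fun i _ => ?_
  change (G ∘ₗ LinearMap.single R (fun i => κ i → R) i) (x i) = _
  conv_lhs => rw [pi_eq_sum_univ' (x i), map_sum]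
  simp [mul_comm]

def traceZeroSubspace {ι : Type*} (κ : ι → Type*) [∀ i, Fintype (κ i)] :
    Submodule ℝ ((i : ι) → κ i → ℝ) where
  carrier := {y | ∀ i, ∑ j, y i j = 0}
  add_mem' hx hy i := by simp [sum_add_distrib, hx i, hy i]
  zero_mem' i := by simp
  smul_mem' c y hy i := by simp [← mul_sum, hy i]

theorem exists_single_ne_single_of_apply_ne_zero {ι : Type*} {κ : ι → Type*} [Fintype ι]
    [DecidableEq ι] [∀ i, Fintype (κ i)] [∀ i, DecidableEq (κ i)]
    (G : ((i : ι) → κ i → ℝ) →ₗ[ℝ] ℝ) {v : (i : ι) → κ i → ℝ}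
    (hv : v ∈ traceZeroSubspace κ) (hGv : G v ≠ 0) :
    ∃ i j k, G (Pi.single i (Pi.single j 1)) ≠ G (Pi.single i (Pi.single k 1)) := by
  by_contra! hconst
  refine hGv ((G.apply_eq_sum_sum_single_mul v).trans (sum_eq_zero fun i _ => ?_))
  rcases isEmpty_or_nonempty (κ i) with hκ | ⟨⟨j₀⟩⟩
  · exact sum_of_isEmpty _
  · simp_rw [hconst i _ j₀, ← mul_sum, hv i, mul_zero]

theorem exists_pos_of_meets_weyl_translates {ι : Type*} [Fintype ι] [DecidableEq ι]
    {n : ι → ℕ} {K : Set ((i : ι) → Fin (n i) → ℝ)}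
    (hmeet : ∀ σ : (i : ι) → Equiv.Perm (Fin (n i)), ∃ y : (i : ι) → Fin (n i) → ℝ,
      (fun i l => y i (σ i l)) ∈ K ∧ ∀ i, y i ∈ posWeightConeInterior (n i))
    (G : ((i : ι) → Fin (n i) → ℝ) →ₗ[ℝ] ℝ)
    (hG : ∃ v ∈ traceZeroSubspace (fun i => Fin (n i)), G v ≠ 0) :
    ∃ x ∈ K, x ∈ traceZeroSubspace (fun i => Fin (n i)) ∧ 0 < G x := by
  set a : (i : ι) → Fin (n i) → ℝ := fun i j => G (Pi.single i (Pi.single j 1))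
  choose τ hτ using fun i => exists_perm_antitone_comp (a i)
  obtain ⟨y, hyK, hy⟩ := hmeet fun i => (τ i).symm
  refine ⟨_, hyK, fun i => ((τ i).symm.sum_comp (y i)).trans (hy i).1, ?_⟩
  have hGy : G (fun i l => y i ((τ i).symm l)) = ∑ i, ∑ m, a i (τ i m) * y i m := by
    rw [G.apply_eq_sum_sum_single_mul]
    refine sum_congr rfl fun i _ => ?_
    rw [← Equiv.sum_comp (τ i)]
    simp [a]
  obtain ⟨v, hv, hGv⟩ := hG
  obtain ⟨i, j, k, hjk⟩ := exists_single_ne_single_of_apply_ne_zero G hv hGv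
  rw [hGy]
  refine sum_pos' (fun i _ => sum_mul_nonneg_of_antitone (hτ i) (hy i)) ⟨i, mem_univ _, ?_⟩
  refine sum_mul_pos_of_antitone (hτ i) (j := (τ i).symm j) (k := (τ i).symm k) ?_ (hy i)
  simpa using hjk

theorem Convex.zero_mem_interior_of_forall_exists_pos {V : Type*} [NormedAddCommGroup V]
    [NormedSpace ℝ V] [FiniteDimensional ℝ V] {K : Set V} (hK : Convex ℝ K) (hne : K.Nonempty)
    (hpos : ∀ φ : Module.Dual ℝ V, φ ≠ 0 → ∃ x ∈ K, 0 < φ x) : (0 : V) ∈ interior K := by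
  by_contra h0
  by_cases hint : (interior K).Nonempty
  · obtain ⟨f, hf0, hf⟩ := geometric_hahn_banach_of_nonempty_interior_point hK h0 hint
    obtain ⟨x, hx, hfx⟩ := hpos f (ContinuousLinearMap.coe_injective.ne hf0)
    exact (hfx.trans_le ((hf x hx).trans_eq (map_zero f))).false
  · obtain ⟨x₀, hx₀⟩ := hne
    have hx₀span := subset_affineSpan ℝ K hx₀
    have hdir : (affineSpan ℝ K).direction < ⊤ := by
      rw [lt_top_iff_ne_top, Ne, AffineSubspace.direction_eq_top_iff_of_nonempty ⟨x₀, hx₀span⟩,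
        ← hK.interior_nonempty_iff_affineSpan_eq_top]
      exact hint
    obtain ⟨φ, hφ0, hker⟩ := Submodule.exists_le_ker_of_lt_top _ hdir
    have hconst : ∀ x ∈ K, φ x = φ x₀ := fun x hx => by
      have := hker (AffineSubspace.vsub_mem_direction (subset_affineSpan ℝ K hx) hx₀span)
      rwa [LinearMap.mem_ker, vsub_eq_sub, map_sub, sub_eq_zero] at this
    obtain ⟨x, hx, hφx⟩ := hpos φ hφ0
    obtain ⟨z, hz, hφz⟩ := hpos (-φ) (neg_ne_zero.2 hφ0)
    rw [hconst x hx] at hφx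
    rw [LinearMap.neg_apply, hconst z hz] at hφz
    linarith

theorem convex_mem_nhds_zero_of_meets_weyl_translates_general
    (f : ℕ) (n : Fin f → ℕ)
    (K : Set ((i : Fin f) → Fin (n i) → ℝ))
    (hKconv : Convex ℝ K)
    (hmeet : ∀ σ : (i : Fin f) → Equiv.Perm (Fin (n i)),
      ∃ y : (i : Fin f) → Fin (n i) → ℝ,
        (fun i l => y i (σ i l)) ∈ K ∧
        (∀ i, ∑ j, y i j = 0) ∧
        (∀ i, ∀ m : ℕ, 1 ≤ m → m < n i →
          0 < ∑ l ∈ Finset.univ.filter (fun l : Fin (n i) => (l : ℕ) < m), y i l)) :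
    ∃ r > 0, ∀ y : (i : Fin f) → Fin (n i) → ℝ,
      (∀ i, ∑ j, y i j = 0) → ‖y‖ < r → y ∈ K := by
  set T := traceZeroSubspace (fun i => Fin (n i))
  have hmeet' : ∀ σ : (i : Fin f) → Equiv.Perm (Fin (n i)), ∃ y : (i : Fin f) → Fin (n i) → ℝ,
      (fun i l => y i (σ i l)) ∈ K ∧ ∀ i, y i ∈ posWeightConeInterior (n i) := fun σ => by
    obtain ⟨y, hyK, hsum, hpos⟩ := hmeet σ
    exact ⟨y, hyK, fun i => ⟨hsum i, hpos i⟩⟩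
  have hne : (((↑) : T → _) ⁻¹' K).Nonempty := by
    obtain ⟨y, hyK, hy⟩ := hmeet' 1
    exact ⟨⟨y, fun i => (hy i).1⟩, hyK⟩
  have h0 : (0 : T) ∈ interior (((↑) : T → _) ⁻¹' K) := by
    refine (hKconv.linear_preimage T.subtype).zero_mem_interior_of_forall_exists_pos hne
      fun φ hφ => ?_
    obtain ⟨G, rfl⟩ := LinearMap.exists_extend φ
    obtain ⟨v, hv⟩ := DFunLike.ne_iff.1 hφ
    obtain ⟨x, hxK, hxT, hx⟩ := exists_pos_of_meets_weyl_translates hmeet' G ⟨v, v.2, hv⟩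
    exact ⟨⟨x, hxT⟩, hxK, hx⟩
  obtain ⟨r, hr, hball⟩ := Metric.mem_nhds_iff.1 (mem_interior_iff_mem_nhds.1 h0)
  exact ⟨r, hr, fun y hy hyr => hball (mem_ball_zero_iff.2 (show ‖(⟨y, hy⟩ : T)‖ < r from hyr))⟩

/-- Lemma (1.3), abstract form: if a convex set `K` contained in the trace-zero space
`𝔱* = {y : ∀ i, ∑ j, y i j = 0}` meets every Weyl translate `σ·C⁺` of the interior `C⁺`
of the positive-weight cone (the set of trace-zero vectors all of whose proper initial
partial sums are strictly positive), then `K` contains a neighborhood of the origin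
of `𝔱*`. -/
theorem convex_mem_nhds_zero_of_meets_weyl_translates
    (f : ℕ) (n : Fin f → ℕ) (hn : ∀ i, 1 ≤ n i)
    (K : Set ((i : Fin f) → Fin (n i) → ℝ))
    (hKsub : ∀ y ∈ K, ∀ i, ∑ j, y i j = 0)
    (hKconv : Convex ℝ K)
    (hmeet : ∀ σ : (i : Fin f) → Equiv.Perm (Fin (n i)),
      ∃ y : (i : Fin f) → Fin (n i) → ℝ,
        (fun i l => y i (σ i l)) ∈ K ∧
        (∀ i, ∑ j, y i j = 0) ∧
        (∀ i, ∀ m : ℕ, 1 ≤ m → m < n i →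
          0 < ∑ l ∈ Finset.univ.filter (fun l : Fin (n i) => (l : ℕ) < m), y i l)) :
    ∃ r > 0, ∀ y : (i : Fin f) → Fin (n i) → ℝ,
      (∀ i, ∑ j, y i j = 0) → ‖y‖ < r → y ∈ K :=
  convex_mem_nhds_zero_of_meets_weyl_translates_general f n K hKconv hmeet
end

section
/- Suppose the first two columns of x₁ vanish, i.e., x_{1,j1} = x_{1,j2} = 0 for all 1 ≤ j ≤ 6, and suppose x_{2,21} = 0. Then Y⁴ divides D(X,Y) in k[X,Y]. (This is the contrapositive form of the nonvanishing claims of Proposition (3.14), parts (1) (the L₈ case) and (11): under these vanishing conditions the Pfaffian form F_x is divisible by Y², so x is not semistable.) -/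
open Matrix MvPolynomial

/-- Proposition (3.14), parts (1) (the `L₈` case) and (11): if the first two columns of `x₁`
vanish and `x_{2,21} = 0`, then `Y⁴` divides `D(X,Y) = det(X·x₁ + Y·x₂)`. -/
theorem divides_pow_four_L8 {k : Type*} [Field k] (x₁ x₂ : Matrix (Fin 6) (Fin 6) k)
    (h1alt : x₁ᵀ = -x₁) (h1diag : ∀ j, x₁ j j = 0)
    (h2alt : x₂ᵀ = -x₂) (h2diag : ∀ j, x₂ j j = 0)
    (hcol1 : ∀ j, x₁ j 0 = 0)
    (hcol2 : ∀ j, x₁ j 1 = 0)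
    (h221 : x₂ 1 0 = 0) :
    (X 1 : MvPolynomial (Fin 2) k) ^ 4 ∣
      (Matrix.of fun a b =>
        (X 0 : MvPolynomial (Fin 2) k) * C (x₁ a b) + X 1 * C (x₂ a b)).det := by
  classical
  set M : Matrix (Fin 6) (Fin 6) (MvPolynomial (Fin 2) k) :=
    Matrix.of fun a b => (X 0 : MvPolynomial (Fin 2) k) * C (x₁ a b) + X 1 * C (x₂ a b)
    with hM
  have h1 : ∀ a b, x₁ a b = - x₁ b a := by
    intro a b
    have := congrFun (congrFun h1alt b) a
    simpa [Matrix.transpose_apply] using this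
  have h2 : ∀ a b, x₂ a b = - x₂ b a := by
    intro a b
    have := congrFun (congrFun h2alt b) a
    simpa [Matrix.transpose_apply] using this
  have hx201 : x₂ 0 1 = 0 := by rw [h2, h221, neg_zero]
  have hMent : ∀ a b, M a b = X 0 * C (x₁ a b) + X 1 * C (x₂ a b) := fun a b => rfl
  rw [Matrix.det_apply]
  apply Finset.dvd_sum
  intro σ _
  have hsmul : ∀ q : MvPolynomial (Fin 2) k,
      (X 1 : MvPolynomial (Fin 2) k) ^ 4 ∣ q →
      (X 1 : MvPolynomial (Fin 2) k) ^ 4 ∣ (Equiv.Perm.sign σ) • q := by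
    intro q hq
    rcases Int.units_eq_one_or (Equiv.Perm.sign σ) with h | h <;>
      simp [h, hq, dvd_neg]
  apply hsmul
  by_cases h0 : σ 0 = 0 ∨ σ 0 = 1
  · have hz : M (σ 0) 0 = 0 := by
      rcases h0 with h | h <;> rw [hMent, h] <;>
        simp [hcol1, h2diag, h221]
    rw [Finset.prod_eq_zero (f := fun i => M (σ i) i) (Finset.mem_univ (0 : Fin 6)) hz]; exact dvd_zero _
  by_cases h1' : σ 1 = 0 ∨ σ 1 = 1
  · have hz : M (σ 1) 1 = 0 := by
      rcases h1' with h | h <;> rw [hMent, h] <;>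
        simp [hcol2, h2diag, hx201]
    rw [Finset.prod_eq_zero (f := fun i => M (σ i) i) (Finset.mem_univ (1 : Fin 6)) hz]; exact dvd_zero _
  push_neg at h0 h1'
  set a : Fin 6 := σ.symm 0 with ha
  set b : Fin 6 := σ.symm 1 with hb
  have hσa : σ a = 0 := σ.apply_symm_apply 0
  have hσb : σ b = 1 := σ.apply_symm_apply 1
  have ha0 : a ≠ 0 := fun h => h0.1 (h ▸ hσa)
  have ha1 : a ≠ 1 := fun h => h1'.1 (h ▸ hσa)
  have hb0 : b ≠ 0 := fun h => h0.2 (h ▸ hσb)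
  have hb1 : b ≠ 1 := fun h => h1'.2 (h ▸ hσb)
  have hab : a ≠ b := fun h => by
    have : (0 : Fin 6) = 1 := by rw [← hσa, ← hσb, h]
    exact absurd this (by decide)
  set s : Finset (Fin 6) := {0, 1, a, b} with hs
  have hcard : s.card = 4 := by
    rw [hs]
    rw [Finset.card_insert_of_notMem (by simp [ha0.symm, hb0.symm]),
      Finset.card_insert_of_notMem (by simp [ha1.symm, hb1.symm]),
      Finset.card_insert_of_notMem (by simp [hab]),
      Finset.card_singleton]
  have hY : ∀ i ∈ s, (X 1 : MvPolynomial (Fin 2) k) ∣ M (σ i) i := by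
    intro i hi
    simp only [hs, Finset.mem_insert, Finset.mem_singleton] at hi
    rcases hi with rfl | rfl | rfl | rfl
    · rw [hMent, hcol1, map_zero, mul_zero, zero_add]
      exact dvd_mul_right _ _
    · rw [hMent, hcol2, map_zero, mul_zero, zero_add]
      exact dvd_mul_right _ _
    · rw [hMent, hσa, h1 0 a, hcol1, neg_zero, map_zero, mul_zero, zero_add]
      exact dvd_mul_right _ _
    · rw [hMent, hσb, h1 1 b, hcol2, neg_zero, map_zero, mul_zero, zero_add]
      exact dvd_mul_right _ _
  calc (X 1 : MvPolynomial (Fin 2) k) ^ 4 = ∏ _i ∈ s, (X 1 : MvPolynomial (Fin 2) k) := by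
        rw [Finset.prod_const, hcard]
    _ ∣ ∏ i ∈ s, M (σ i) i := Finset.prod_dvd_prod_of_dvd _ _ hY
    _ ∣ ∏ i, M (σ i) i := Finset.prod_dvd_prod_of_subset _ _ _ (Finset.subset_univ s)
end

section
/- Suppose the first column of x₁ vanishes (x_{1,j1} = 0 for all j), suppose x_{1,32} = x_{1,42} = x_{1,52} = 0, and suppose x_{2,21} = x_{2,31} = x_{2,41} = x_{2,51} = 0. Then Y⁴ divides D(X,Y) in k[X,Y]. (This is the contrapositive form of Proposition (3.14)(4): if x ∈ L₇ is semistable, then x_{2,j1} ≠ 0 for some 2 ≤ j ≤ 5.) -/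
open Matrix MvPolynomial

/-- Proposition (3.14)(4), contrapositive: if the first column of `x₁` vanishes,
`x_{1,32} = x_{1,42} = x_{1,52} = 0` and `x_{2,21} = x_{2,31} = x_{2,41} = x_{2,51} = 0`,
then `Y⁴` divides `D(X,Y)`. -/
theorem divides_pow_four_L7 {k : Type*} [Field k] (x₁ x₂ : Matrix (Fin 6) (Fin 6) k)
    (h1alt : x₁ᵀ = -x₁) (h1diag : ∀ j, x₁ j j = 0)
    (h2alt : x₂ᵀ = -x₂) (h2diag : ∀ j, x₂ j j = 0)
    (hcol1 : ∀ j, x₁ j 0 = 0)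
    (h132 : x₁ 2 1 = 0)
    (h142 : x₁ 3 1 = 0)
    (h152 : x₁ 4 1 = 0)
    (h221 : x₂ 1 0 = 0)
    (h231 : x₂ 2 0 = 0)
    (h241 : x₂ 3 0 = 0)
    (h251 : x₂ 4 0 = 0) :
    (X 1 : MvPolynomial (Fin 2) k) ^ 4 ∣
      (Matrix.of fun a b =>
        (X 0 : MvPolynomial (Fin 2) k) * C (x₁ a b) + X 1 * C (x₂ a b)).det := by
  have tr1 : ∀ i j : Fin 6, x₁ j i = - x₁ i j := fun i j => by
    have := congrFun (congrFun h1alt i) j; simpa using this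
  have tr2 : ∀ i j : Fin 6, x₂ j i = - x₂ i j := fun i j => by
    have := congrFun (congrFun h2alt i) j; simpa using this
  have a0 : ∀ j, x₁ 0 j = 0 := fun j => by rw [tr1 j 0, hcol1, neg_zero]
  have b01 : x₂ 0 1 = 0 := by rw [tr2 1 0, h221, neg_zero]
  have b02 : x₂ 0 2 = 0 := by rw [tr2 2 0, h231, neg_zero]
  have b03 : x₂ 0 3 = 0 := by rw [tr2 3 0, h241, neg_zero]
  have b04 : x₂ 0 4 = 0 := by rw [tr2 4 0, h251, neg_zero]
  have c12 : x₁ 1 2 = 0 := by rw [tr1 2 1, h132, neg_zero]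
  have c13 : x₁ 1 3 = 0 := by rw [tr1 3 1, h142, neg_zero]
  have c14 : x₁ 1 4 = 0 := by rw [tr1 4 1, h152, neg_zero]
  rw [Matrix.det_succ_row_zero]
  simp only [Fin.sum_univ_six, Matrix.of_apply, a0, b01, b02, b03, b04,
    h1diag, h2diag, map_zero, mul_zero, add_zero, zero_mul, zero_add, Fin.isValue,
    Fin.val_zero, Fin.val_one, pow_zero, pow_one, one_mul, neg_mul, mul_neg, neg_neg, neg_zero]
  have sA0 : (5:Fin 6).succAbove 0 = 0 := rfl
  have sA1 : (5:Fin 6).succAbove 1 = 1 := rfl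
  have sA2 : (5:Fin 6).succAbove 2 = 2 := rfl
  have sA3 : (5:Fin 6).succAbove 3 = 3 := rfl
  have sA4 : (5:Fin 6).succAbove 4 = 4 := rfl
  have sc0 : Fin.succ (0:Fin 5) = 1 := rfl
  have sc1 : Fin.succ (1:Fin 5) = 2 := rfl
  have sc2 : Fin.succ (2:Fin 5) = 3 := rfl
  have sc3 : Fin.succ (3:Fin 5) = 4 := rfl
  have sc4 : Fin.succ (4:Fin 5) = 5 := rfl
  rw [Matrix.det_succ_column_zero]
  simp only [Fin.sum_univ_five, Matrix.submatrix_apply, Matrix.of_apply, sA0, sA1, sA2, sA3, sA4,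
    sc0, sc1, sc2, sc3, sc4, hcol1, h221, h231, h241, h251, map_zero, mul_zero, add_zero, zero_mul,
    zero_add, mul_neg, neg_mul, neg_neg, neg_zero, Fin.isValue]
  set N := ((Matrix.of fun a b =>
      (X 0 : MvPolynomial (Fin 2) k) * C (x₁ a b) + X 1 * C (x₂ a b)).submatrix
      Fin.succ (Fin.succAbove 5)).submatrix (Fin.succAbove 4) Fin.succ with hNdef
  have u0 : Fin.succ ((4:Fin 5).succAbove (0:Fin 4)) = (1:Fin 6) := rfl
  have u1 : Fin.succ ((4:Fin 5).succAbove (1:Fin 4)) = (2:Fin 6) := rfl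
  have u2 : Fin.succ ((4:Fin 5).succAbove (2:Fin 4)) = (3:Fin 6) := rfl
  have u3 : Fin.succ ((4:Fin 5).succAbove (3:Fin 4)) = (4:Fin 6) := rfl
  have v0 : (5:Fin 6).succAbove (Fin.succ (0:Fin 4)) = (1:Fin 6) := rfl
  have v1 : (5:Fin 6).succAbove (Fin.succ (1:Fin 4)) = (2:Fin 6) := rfl
  have v2 : (5:Fin 6).succAbove (Fin.succ (2:Fin 4)) = (3:Fin 6) := rfl
  have v3 : (5:Fin 6).succAbove (Fin.succ (3:Fin 4)) = (4:Fin 6) := rfl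
  have hNsq : (X 1 : MvPolynomial (Fin 2) k) ^ 2 ∣ N.det := by
    have hr0 : N 0 = (X 1 : MvPolynomial (Fin 2) k) •
        ![C (x₂ 1 1), C (x₂ 1 2), C (x₂ 1 3), C (x₂ 1 4)] := by
      funext j
      fin_cases j <;>
        simp [hNdef, u0, u1, u2, u3, v0, v1, v2, v3, sA0, sA1, sA2, sA3, sA4, sc0, sc1, sc2, sc3, sc4, c12, c13, c14, h1diag]
    have step1 : N.det = (X 1 : MvPolynomial (Fin 2) k) *
        (N.updateRow 0 ![C (x₂ 1 1), C (x₂ 1 2), C (x₂ 1 3), C (x₂ 1 4)]).det := by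
      conv_lhs => rw [← Matrix.updateRow_eq_self N 0, hr0]
      rw [Matrix.det_updateRow_smul]
    set N₁ := N.updateRow 0 ![C (x₂ 1 1), C (x₂ 1 2), C (x₂ 1 3), C (x₂ 1 4)] with hN₁
    have hc0 : (fun i => N₁ i 0) = (X 1 : MvPolynomial (Fin 2) k) •
        ![0, C (x₂ 2 1), C (x₂ 3 1), C (x₂ 4 1)] := by
      funext i
      fin_cases i <;>
        simp [hN₁, hNdef, u0, u1, u2, u3, v0, v1, v2, v3, sA0, sA1, sA2, sA3, sA4, sc0, sc1, sc2, sc3, sc4, h132, h142, h152, h2diag]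
    have step2 : N₁.det = (X 1 : MvPolynomial (Fin 2) k) *
        (N₁.updateCol 0 ![0, C (x₂ 2 1), C (x₂ 3 1), C (x₂ 4 1)]).det := by
      conv_lhs => rw [← Matrix.updateCol_eq_self N₁ 0, hc0]
      rw [Matrix.det_updateCol_smul]
    rw [step1, step2]
    exact ⟨(N₁.updateCol 0 ![0, C (x₂ 2 1), C (x₂ 3 1), C (x₂ 4 1)]).det, by ring⟩
  obtain ⟨Q, hQ⟩ := hNsq
  rw [hQ]
  exact ⟨(-1) ^ (((5:Fin 6)):ℕ) * C (x₂ 0 5) * ((-1) ^ (((4:Fin 5)):ℕ) * C (x₂ 5 0) * Q),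
    by ring⟩
end

section
/- Suppose x_{1,21} = x_{1,31} = x_{1,32} = 0 and x_{1,41} = x_{1,42} = x_{1,43} = x_{1,51} = x_{1,52} = x_{1,53} = 0 (so the entire upper-left 3×3 block of x₁ and the first two rows of its lower-left 3×3 block vanish), and suppose x_{2,21} = x_{2,31} = x_{2,32} = 0. Then Y⁴ divides D(X,Y) in k[X,Y]. (This is the contrapositive form of Proposition (3.14)(8): if x ∈ L₁₃ is semistable, then x_{2,21} or x_{2,31} or x_{2,32} is nonzero.) -/
/-!
Split `k⁶ = k³ ⊕ k³`. The pencil `M = X x₁ + Y x₂` is alternating and its upper-left block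
vanishes, so `M = [[0, -Cᵀ], [C, D]]` and `det C ^ 2 ∣ det M` (in fact `D = det C ^ 2`: `±det C`
is the Pfaffian). The first two rows of `C` only involve `x₂`, hence are divisible by `Y`, so
`Y ^ 2 ∣ det C`.
-/

open Matrix MvPolynomial

namespace Matrix

variable {n R : Type*}

theorem apply_eq_zero_of_transpose_eq_neg [NegZeroClass R] {x : Matrix n n R} (hx : xᵀ = -x)
    {i j : n} (h : x j i = 0) : x i j = 0 := by
  simpa [h] using congr_fun₂ hx j i

variable [Fintype n] [DecidableEq n] [CommRing R]

theorem pow_card_dvd_det_of_dvd_rows (A : Matrix n n R) (a : R) (s : Finset n)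
    (h : ∀ i ∈ s, ∀ j, a ∣ A i j) : a ^ s.card ∣ A.det := by
  choose! B hB using h
  have hA : A = diagonal (fun i => if i ∈ s then a else 1) *
      of (fun i j => if i ∈ s then B i j else A i j) := by
    ext i j
    by_cases hi : i ∈ s
    · simp [diagonal_mul, hi, hB i hi j]
    · simp [diagonal_mul, hi]
  rw [hA, det_mul, det_diagonal, Finset.prod_ite_mem, Finset.univ_inter, Finset.prod_const]
  exact dvd_mul_right _ _

theorem det_mul_det_dvd_det_fromBlocks_zero₁₁ (B C D : Matrix n n R) :
    B.det * C.det ∣ (fromBlocks 0 B C D).det := by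
  have h : fromBlocks 0 B C D = fromBlocks B 0 D C * fromBlocks 0 1 1 0 := by
    simp [fromBlocks_multiply]
  rw [h, det_mul, det_fromBlocks_zero₁₂]
  exact dvd_mul_right _ _

theorem det_toBlocks₂₁_sq_dvd_det (A : Matrix (n ⊕ n) (n ⊕ n) R) (hA : Aᵀ = -A)
    (h₁₁ : A.toBlocks₁₁ = 0) : A.toBlocks₂₁.det ^ 2 ∣ A.det := by
  have h₁₂ : A.toBlocks₁₂ = -A.toBlocks₂₁ᵀ := by
    ext i j
    simpa [toBlocks₁₂, toBlocks₂₁] using congr_fun₂ hA (Sum.inr j) (Sum.inl i)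
  have hdet : A.toBlocks₁₂.det = (-1) ^ Fintype.card n * A.toBlocks₂₁.det := by
    rw [h₁₂, det_neg, det_transpose]
  calc A.toBlocks₂₁.det ^ 2 ∣ A.toBlocks₁₂.det * A.toBlocks₂₁.det :=
        ⟨(-1) ^ Fintype.card n, by rw [hdet]; ring⟩
    _ ∣ (fromBlocks 0 A.toBlocks₁₂ A.toBlocks₂₁ A.toBlocks₂₂).det :=
        det_mul_det_dvd_det_fromBlocks_zero₁₁ _ _ _
    _ = A.det := by rw [← h₁₁, fromBlocks_toBlocks]

end Matrix

theorem transpose_pencil_eq_neg {n σ R : Type*} [CommRing R] {x₁ x₂ : Matrix n n R}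
    (h₁ : x₁ᵀ = -x₁) (h₂ : x₂ᵀ = -x₂) (p q : MvPolynomial σ R) :
    (of fun a b => p * C (x₁ a b) + q * C (x₂ a b))ᵀ =
      -of fun a b => p * C (x₁ a b) + q * C (x₂ a b) := by
  ext a b
  have e₁ := congr_fun₂ h₁ b a
  have e₂ := congr_fun₂ h₂ b a
  simp only [transpose_apply] at e₁ e₂
  simp [e₁, e₂]
  ring

/-- Proposition (3.14)(8), contrapositive: if the upper-left `3×3` block of `x₁` and the first
two rows of its lower-left `3×3` block vanish, and `x_{2,21} = x_{2,31} = x_{2,32} = 0`,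
then `Y⁴` divides `D(X,Y)`. -/
theorem divides_pow_four_L13 {k : Type*} [Field k] (x₁ x₂ : Matrix (Fin 6) (Fin 6) k)
    (h1alt : x₁ᵀ = -x₁) (h1diag : ∀ j, x₁ j j = 0)
    (h2alt : x₂ᵀ = -x₂) (h2diag : ∀ j, x₂ j j = 0)
    (h121 : x₁ 1 0 = 0)
    (h131 : x₁ 2 0 = 0)
    (h132 : x₁ 2 1 = 0)
    (h141 : x₁ 3 0 = 0)
    (h142 : x₁ 3 1 = 0)
    (h143 : x₁ 3 2 = 0)
    (h151 : x₁ 4 0 = 0)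
    (h152 : x₁ 4 1 = 0)
    (h153 : x₁ 4 2 = 0)
    (h221 : x₂ 1 0 = 0)
    (h231 : x₂ 2 0 = 0)
    (h232 : x₂ 2 1 = 0) :
    (X 1 : MvPolynomial (Fin 2) k) ^ 4 ∣
      (Matrix.of fun a b =>
        (X 0 : MvPolynomial (Fin 2) k) * C (x₁ a b) + X 1 * C (x₂ a b)).det := by
  set M := of fun a b => (X 0 : MvPolynomial (Fin 2) k) * C (x₁ a b) + X 1 * C (x₂ a b)
  set e : Fin 3 ⊕ Fin 3 ≃ Fin 6 := finSumFinEquiv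
  set A := M.submatrix e e
  have hA : Aᵀ = -A := by
    rw [transpose_submatrix, transpose_pencil_eq_neg h1alt h2alt]; rfl
  have hA₁₁ : A.toBlocks₁₁ = 0 := by
    ext i j : 1
    have hx : x₁ (e (.inl i)) (e (.inl j)) = 0 ∧ x₂ (e (.inl i)) (e (.inl j)) = 0 := by
      fin_cases i <;> fin_cases j <;> constructor <;>
        first
        | exact h1diag _ | exact h2diag _ | assumption
        | exact apply_eq_zero_of_transpose_eq_neg h1alt (by assumption)
        | exact apply_eq_zero_of_transpose_eq_neg h2alt (by assumption)
    simp [A, M, toBlocks₁₁, hx]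
  have hA₂₁ : ∀ i ∈ ({0, 1} : Finset (Fin 3)), ∀ j, X 1 ∣ A.toBlocks₂₁ i j := by
    intro i hi j
    have hx : x₁ (e (.inr i)) (e (.inl j)) = 0 := by
      simp only [Finset.mem_insert, Finset.mem_singleton] at hi
      rcases hi with rfl | rfl <;> fin_cases j <;> assumption
    simp [A, M, toBlocks₂₁, hx]
  calc (X 1 : MvPolynomial (Fin 2) k) ^ 4 = (X 1 ^ ({0, 1} : Finset (Fin 3)).card) ^ 2 := by
        rw [← pow_mul]; rfl
    _ ∣ A.toBlocks₂₁.det ^ 2 :=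
        pow_dvd_pow_of_dvd (A.toBlocks₂₁.pow_card_dvd_det_of_dvd_rows _ _ hA₂₁) 2
    _ ∣ A.det := A.det_toBlocks₂₁_sq_dvd_det hA hA₁₁
    _ = M.det := det_submatrix_equiv_self _ _
end

section
/- Suppose the first column of x₁ vanishes (x_{1,j1} = 0 for all j), suppose x_{1,32} = x_{1,42} = x_{1,43} = x_{1,52} = x_{1,53} = 0, and suppose x_{2,21} = x_{2,31} = 0. Then Y³ divides D(X,Y) in k[X,Y]. (This is the contrapositive form of Proposition (3.14)(10): if x ∈ L₁₆ is semistable, then x_{2,21} or x_{2,31} is nonzero, since divisibility of D by Y³ forces the Pfaffian F_x to have a repeated factor.) -/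
open Matrix MvPolynomial

/-- Proposition (3.14)(10), contrapositive: if the first column of `x₁` vanishes,
`x_{1,32} = x_{1,42} = x_{1,43} = x_{1,52} = x_{1,53} = 0` and `x_{2,21} = x_{2,31} = 0`,
then `Y³` divides `D(X,Y)`. -/
theorem divides_pow_three_L16 {k : Type*} [Field k] (x₁ x₂ : Matrix (Fin 6) (Fin 6) k)
    (h1alt : x₁ᵀ = -x₁) (h1diag : ∀ j, x₁ j j = 0)
    (h2alt : x₂ᵀ = -x₂) (h2diag : ∀ j, x₂ j j = 0)
    (hcol1 : ∀ j, x₁ j 0 = 0)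
    (h132 : x₁ 2 1 = 0)
    (h142 : x₁ 3 1 = 0)
    (h143 : x₁ 3 2 = 0)
    (h152 : x₁ 4 1 = 0)
    (h153 : x₁ 4 2 = 0)
    (h221 : x₂ 1 0 = 0)
    (h231 : x₂ 2 0 = 0) :
    (X 1 : MvPolynomial (Fin 2) k) ^ 3 ∣
      (Matrix.of fun a b =>
        (X 0 : MvPolynomial (Fin 2) k) * C (x₁ a b) + X 1 * C (x₂ a b)).det := by
  set M : Matrix (Fin 6) (Fin 6) (MvPolynomial (Fin 2) k) :=
    Matrix.of fun a b =>
      (X 0 : MvPolynomial (Fin 2) k) * C (x₁ a b) + X 1 * C (x₂ a b) with hM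
  -- antisymmetry in pointwise form
  have hneg : ∀ i j : Fin 6, x₁ i j = - x₁ j i := by
    intro i j
    have := congrFun (congrFun h1alt j) i
    simpa [Matrix.transpose_apply] using this
  have hrow0 : ∀ j, x₁ 0 j = 0 := by
    intro j; rw [hneg, hcol1, neg_zero]
  have e12 : x₁ 1 2 = 0 := by rw [hneg, h132, neg_zero]
  have e13 : x₁ 1 3 = 0 := by rw [hneg, h142, neg_zero]
  have e14 : x₁ 1 4 = 0 := by rw [hneg, h152, neg_zero]
  have e23 : x₁ 2 3 = 0 := by rw [hneg, h143, neg_zero]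
  have e24 : x₁ 2 4 = 0 := by rw [hneg, h153, neg_zero]
  have hrow12 : ∀ r j : Fin 6, (r = 1 ∨ r = 2) → j ≠ 5 → x₁ r j = 0 := by
    intro r j hr hj
    fin_cases j <;> rcases hr with rfl | rfl <;>
      first
        | exact hcol1 _
        | exact h1diag _
        | assumption
        | simp at hj
  -- divisibility of entries
  have hYdvd : ∀ r j : Fin 6, x₁ r j = 0 → (X 1 : MvPolynomial (Fin 2) k) ∣ M r j := by
    intro r j h
    refine ⟨C (x₂ r j), ?_⟩
    simp [hM, Matrix.of_apply, h]
  have hzero : ∀ r j : Fin 6, x₁ r j = 0 → x₂ r j = 0 → M r j = 0 := by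
    intro r j h h'
    simp [hM, Matrix.of_apply, h, h']
  rw [Matrix.det_apply']
  refine Finset.dvd_sum ?_
  intro σ _
  refine Dvd.dvd.mul_left ?_ _
  by_cases hσ0 : σ 0 = 0
  · have : M (σ 0) 0 = 0 := by rw [hσ0]; exact hzero _ _ (h1diag 0) (h2diag 0)
    rw [Finset.prod_eq_zero (f := fun i => M (σ i) i) (Finset.mem_univ 0) this]
    exact dvd_zero _
  by_cases hσ1 : σ 0 = 1
  · have : M (σ 0) 0 = 0 := by rw [hσ1]; exact hzero _ _ (hcol1 1) h221
    rw [Finset.prod_eq_zero (f := fun i => M (σ i) i) (Finset.mem_univ 0) this]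
    exact dvd_zero _
  by_cases hσ2 : σ 0 = 2
  · have : M (σ 0) 0 = 0 := by rw [hσ2]; exact hzero _ _ (hcol1 2) h231
    rw [Finset.prod_eq_zero (f := fun i => M (σ i) i) (Finset.mem_univ 0) this]
    exact dvd_zero _
  -- main case: σ 0 ∉ {0,1,2}
  obtain ⟨c, hc5, hcr⟩ : ∃ c : Fin 6, c ≠ 5 ∧ (σ c = 1 ∨ σ c = 2) := by
    by_cases h : σ.symm 1 = 5
    · refine ⟨σ.symm 2, ?_, Or.inr (σ.apply_symm_apply 2)⟩
      intro hc
      have : σ.symm 1 = σ.symm 2 := by rw [h, hc]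
      have : (1 : Fin 6) = 2 := σ.symm.injective this
      simp at this
    · exact ⟨σ.symm 1, h, Or.inl (σ.apply_symm_apply 1)⟩
  set b : Fin 6 := σ.symm 0 with hb
  have hσb : σ b = 0 := σ.apply_symm_apply 0
  have hb0 : b ≠ 0 := by
    intro h; exact hσ0 (h ▸ hσb)
  have hc0 : c ≠ 0 := by
    intro h; rcases hcr with h' | h'
    · exact hσ1 (h ▸ h')
    · exact hσ2 (h ▸ h')
  have hcb : c ≠ b := by
    intro h
    rcases hcr with h' | h' <;> rw [h, hσb] at h' <;> simp at h'
  set S : Finset (Fin 6) := {0, b, c} with hS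
  have hcard : S.card = 3 := by
    rw [hS]
    rw [Finset.card_insert_of_notMem (by simp [hb0.symm, hc0.symm]),
      Finset.card_insert_of_notMem (by simp [Ne.symm hcb]), Finset.card_singleton]
  have hdvd : ∀ i ∈ S, (X 1 : MvPolynomial (Fin 2) k) ∣ M (σ i) i := by
    intro i hi
    rw [hS] at hi
    simp only [Finset.mem_insert, Finset.mem_singleton] at hi
    rcases hi with rfl | rfl | rfl
    · exact hYdvd _ _ (hcol1 _)
    · rw [hσb]; exact hYdvd _ _ (hrow0 _)
    · exact hYdvd _ _ (hrow12 _ _ hcr hc5)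
  calc (X 1 : MvPolynomial (Fin 2) k) ^ 3 = ∏ _i ∈ S, (X 1 : MvPolynomial (Fin 2) k) := by
        rw [Finset.prod_const, hcard]
    _ ∣ ∏ i ∈ S, M (σ i) i := Finset.prod_dvd_prod_of_dvd _ _ hdvd
    _ ∣ ∏ i, M (σ i) i :=
        Finset.prod_dvd_prod_of_subset S Finset.univ _ (Finset.subset_univ S)
end

section
/- Suppose x_{1,21} = x_{1,31} = x_{1,41} = x_{1,32} = x_{1,42} = x_{1,43} = x_{1,51} = x_{1,52} = 0 and x_{2,21} = x_{2,31} = x_{2,41} = x_{2,32} = x_{2,42} = 0. Then Y³ divides D(X,Y) in k[X,Y]. (This is the contrapositive form of Proposition (3.14)(7): if x ∈ L₁₂ is semistable, then x_{2,jk} ≠ 0 for some 2 ≤ j ≤ 4 and 1 ≤ k ≤ 2 with j > k, since divisibility of D by Y³ forces the Pfaffian F_x to have a repeated factor.) -/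
open Matrix MvPolynomial

/-- Positions where (under the hypotheses) both `x₁` and `x₂` vanish. -/
def P0aux (a b : Fin 6) : Prop :=
  a.1 < 4 ∧ b.1 < 4 ∧ ¬((a.1 = 2 ∧ b.1 = 3) ∨ (a.1 = 3 ∧ b.1 = 2))

/-- Positions where (under the hypotheses) `x₁` vanishes. -/
def P1aux (a b : Fin 6) : Prop :=
  (a.1 < 4 ∧ b.1 < 4) ∨ (a.1 = 4 ∧ b.1 < 2) ∨ (b.1 = 4 ∧ a.1 < 2)

instance (a b : Fin 6) : Decidable (P0aux a b) := by unfold P0aux; infer_instance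
instance (a b : Fin 6) : Decidable (P1aux a b) := by unfold P1aux; infer_instance

set_option maxRecDepth 100000 in
set_option maxHeartbeats 1000000 in
lemma key_perm_lemma : ∀ σ : Equiv.Perm (Fin 6),
    (∃ i, P0aux (σ i) i) ∨
      3 ≤ (Finset.univ.filter fun i => P1aux (σ i) i).card := by decide

/-- Proposition (3.14)(7), contrapositive: under the stated vanishing of entries of `x₁`
and `x₂`, `Y³` divides `D(X,Y)`. -/
theorem divides_pow_three_L12 {k : Type*} [Field k] (x₁ x₂ : Matrix (Fin 6) (Fin 6) k)
    (h1alt : x₁ᵀ = -x₁) (h1diag : ∀ j, x₁ j j = 0)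
    (h2alt : x₂ᵀ = -x₂) (h2diag : ∀ j, x₂ j j = 0)
    (h121 : x₁ 1 0 = 0)
    (h131 : x₁ 2 0 = 0)
    (h141 : x₁ 3 0 = 0)
    (h132 : x₁ 2 1 = 0)
    (h142 : x₁ 3 1 = 0)
    (h143 : x₁ 3 2 = 0)
    (h151 : x₁ 4 0 = 0)
    (h152 : x₁ 4 1 = 0)
    (h221 : x₂ 1 0 = 0)
    (h231 : x₂ 2 0 = 0)
    (h241 : x₂ 3 0 = 0)
    (h232 : x₂ 2 1 = 0)
    (h242 : x₂ 3 1 = 0) :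
    (X 1 : MvPolynomial (Fin 2) k) ^ 3 ∣
      (Matrix.of fun a b =>
        (X 0 : MvPolynomial (Fin 2) k) * C (x₁ a b) + X 1 * C (x₂ a b)).det := by
  classical
  have e1 : ∀ a b : Fin 6, x₁ a b = - x₁ b a := by
    intro a b
    have := congrFun (congrFun h1alt b) a
    simpa [Matrix.transpose_apply] using this
  have e2 : ∀ a b : Fin 6, x₂ a b = - x₂ b a := by
    intro a b
    have := congrFun (congrFun h2alt b) a
    simpa [Matrix.transpose_apply] using this
  have h112 : x₁ 0 1 = 0 := by rw [e1]; simp [h121]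
  have h113 : x₁ 0 2 = 0 := by rw [e1]; simp [h131]
  have h114 : x₁ 0 3 = 0 := by rw [e1]; simp [h141]
  have h123 : x₁ 1 2 = 0 := by rw [e1]; simp [h132]
  have h124 : x₁ 1 3 = 0 := by rw [e1]; simp [h142]
  have h134 : x₁ 2 3 = 0 := by rw [e1]; simp [h143]
  have h115 : x₁ 0 4 = 0 := by rw [e1]; simp [h151]
  have h125 : x₁ 1 4 = 0 := by rw [e1]; simp [h152]
  have h212 : x₂ 0 1 = 0 := by rw [e2]; simp [h221]
  have h213 : x₂ 0 2 = 0 := by rw [e2]; simp [h231]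
  have h214 : x₂ 0 3 = 0 := by rw [e2]; simp [h241]
  have h223 : x₂ 1 2 = 0 := by rw [e2]; simp [h232]
  have h224 : x₂ 1 3 = 0 := by rw [e2]; simp [h242]
  have hx1 : ∀ a b : Fin 6, P1aux a b → x₁ a b = 0 := by
    intro a b hab
    unfold P1aux at hab
    clear e1 e2
    fin_cases a <;> fin_cases b <;> simp_all
  have hx2 : ∀ a b : Fin 6, P0aux a b → x₂ a b = 0 := by
    intro a b hab
    unfold P0aux at hab
    clear e1 e2 hx1
    fin_cases a <;> fin_cases b <;> simp_all
  rw [Matrix.det_apply]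
  refine Finset.dvd_sum fun σ _ => ?_
  have hdvd : (X 1 : MvPolynomial (Fin 2) k) ^ 3 ∣
      ∏ i, (Matrix.of fun a b =>
        (X 0 : MvPolynomial (Fin 2) k) * C (x₁ a b) + X 1 * C (x₂ a b)) (σ i) i := by
    rcases key_perm_lemma σ with ⟨i, hi⟩ | h3
    · have hz : (Matrix.of fun a b =>
          (X 0 : MvPolynomial (Fin 2) k) * C (x₁ a b) + X 1 * C (x₂ a b)) (σ i) i = 0 := by
        have hz1 : x₁ (σ i) i = 0 := hx1 _ _ (Or.inl ⟨hi.1, hi.2.1⟩)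
        have hz2 : x₂ (σ i) i = 0 := hx2 _ _ hi
        simp [hz1, hz2]
      have hzero : (∏ j, (Matrix.of fun a b =>
          (X 0 : MvPolynomial (Fin 2) k) * C (x₁ a b) + X 1 * C (x₂ a b)) (σ j) j) = 0 :=
        Finset.prod_eq_zero (Finset.mem_univ i) hz
      rw [hzero]
      exact dvd_zero _
    · have step1 : (X 1 : MvPolynomial (Fin 2) k) ^ 3 ∣
          (X 1 : MvPolynomial (Fin 2) k) ^
            (Finset.univ.filter fun i => P1aux (σ i) i).card :=
        pow_dvd_pow _ h3
      have step2 : (X 1 : MvPolynomial (Fin 2) k) ^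
            (Finset.univ.filter fun i => P1aux (σ i) i).card ∣
          ∏ i ∈ Finset.univ.filter fun i => P1aux (σ i) i,
            (Matrix.of fun a b =>
              (X 0 : MvPolynomial (Fin 2) k) * C (x₁ a b) + X 1 * C (x₂ a b)) (σ i) i := by
        rw [← Finset.prod_const]
        refine Finset.prod_dvd_prod_of_dvd _ _ fun i hi => ?_
        have hmem := Finset.mem_filter.mp hi
        have hz1 : x₁ (σ i) i = 0 := hx1 _ _ hmem.2
        simp only [Matrix.of_apply, hz1, map_zero, mul_zero, zero_add]
        exact dvd_mul_right _ _
      have step3 : (∏ i ∈ Finset.univ.filter fun i => P1aux (σ i) i,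
            (Matrix.of fun a b =>
              (X 0 : MvPolynomial (Fin 2) k) * C (x₁ a b) + X 1 * C (x₂ a b)) (σ i) i) ∣
          ∏ i, (Matrix.of fun a b =>
              (X 0 : MvPolynomial (Fin 2) k) * C (x₁ a b) + X 1 * C (x₂ a b)) (σ i) i :=
        Finset.prod_dvd_prod_of_subset _ _ _ (Finset.filter_subset _ _)
      exact step1.trans (step2.trans step3)
  rcases Int.units_eq_one_or (Equiv.Perm.sign σ) with hs | hs <;> rw [hs] <;>
    simpa using hdvd
end
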